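/- For any p, w ∈ ℝ^3 one has κ2 |p|^2 |w|^2 < E(p) E(w) whenever p ≠ 0 and w ≠ 0; consequently, if w ∈ ℝ^3 \ {0} satisfies E(p+w) = E(p) + E(w) for some p ≠ 0, then w · p > 0. -/

import Mathlib

noncomputable def Edisp (κ1 κ2 : ℝ) (p : EuclideanSpace ℝ (Fin 3)) : ℝ :=
  Real.sqrt (κ1 * ‖p‖ ^ 2 + κ2 * ‖p‖ ^ 4)

/-! Writing `a = |p|²`, `b = |w|²`, `c = w·p`, one has `E(p)² = κ1 a + κ2 a²`, so
`E(p)² E(w)²` exceeds `κ2² a² b²` by the terms carrying `κ1`. Squaring the resonance condition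
gives `κ1 s + κ2 s² = E(p)² + 2 E(p) E(w) + E(w)²` for `s = |p+w|² = a + 2c + b`; the first bound
turns this into `2c (κ1 + κ2 (s + a + b)) > 0`, and the second factor is positive. -/

section

variable {κ1 κ2 : ℝ}

lemma Edisp_sq (hκ1 : 0 ≤ κ1) (hκ2 : 0 ≤ κ2) (p : EuclideanSpace ℝ (Fin 3)) :
    Edisp κ1 κ2 p ^ 2 = κ1 * ‖p‖ ^ 2 + κ2 * (‖p‖ ^ 2) ^ 2 := by
  rw [Edisp, Real.sq_sqrt (by positivity)]
  ring

lemma mul_sq_norm_lt_Edisp_mul_Edisp (hκ1 : 0 < κ1) (hκ2 : 0 ≤ κ2)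
    {p w : EuclideanSpace ℝ (Fin 3)} (hp : p ≠ 0) (hw : w ≠ 0) :
    κ2 * ‖p‖ ^ 2 * ‖w‖ ^ 2 < Edisp κ1 κ2 p * Edisp κ1 κ2 w := by
  have ha : 0 < ‖p‖ ^ 2 := by positivity
  have hb : 0 < ‖w‖ ^ 2 := by positivity
  refine lt_of_pow_lt_pow_left₀ 2 (by unfold Edisp; positivity) ?_
  rw [mul_pow, mul_pow, mul_pow (Edisp _ _ _), Edisp_sq hκ1.le hκ2, Edisp_sq hκ1.le hκ2]
  have hκ1κ2 : 0 ≤ κ1 * κ2 := by positivity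
  nlinarith [mul_pos (mul_pos hκ1 hκ1) (mul_pos ha hb),
    mul_nonneg hκ1κ2 (mul_pos (mul_pos ha hb) hb).le,
    mul_nonneg hκ1κ2 (mul_pos (mul_pos ha hb) ha).le]

lemma inner_pos_of_Edisp_add_eq (hκ1 : 0 < κ1) (hκ2 : 0 ≤ κ2)
    {p w : EuclideanSpace ℝ (Fin 3)} (hp : p ≠ 0) (hw : w ≠ 0)
    (h : Edisp κ1 κ2 (p + w) = Edisp κ1 κ2 p + Edisp κ1 κ2 w) :
    0 < inner ℝ w p := by
  have hsq : κ1 * ‖p + w‖ ^ 2 + κ2 * (‖p + w‖ ^ 2) ^ 2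
      = κ1 * ‖p‖ ^ 2 + κ2 * (‖p‖ ^ 2) ^ 2 + 2 * (Edisp κ1 κ2 p * Edisp κ1 κ2 w)
        + (κ1 * ‖w‖ ^ 2 + κ2 * (‖w‖ ^ 2) ^ 2) := by
    rw [← Edisp_sq hκ1.le hκ2, ← Edisp_sq hκ1.le hκ2, ← Edisp_sq hκ1.le hκ2, h]
    ring
  have hs : ‖p + w‖ ^ 2 = ‖p‖ ^ 2 + 2 * inner ℝ w p + ‖w‖ ^ 2 := by
    rw [norm_add_sq_real, real_inner_comm]
  set a := ‖p‖ ^ 2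
  set b := ‖w‖ ^ 2
  set c := inner ℝ w p
  set s := ‖p + w‖ ^ 2
  have hbound := mul_sq_norm_lt_Edisp_mul_Edisp hκ1 hκ2 hp hw
  have hfactor : 0 < 2 * c * (κ1 + κ2 * (s + a + b)) := by
    rw [hs] at hsq ⊢
    linarith
  have hsecond : 0 < κ1 + κ2 * (s + a + b) := by positivity
  linarith [pos_of_mul_pos_left hfactor hsecond.le]

end

/-- For `p ≠ 0`, `w ≠ 0` one has `κ2 |p|²|w|² < E(p)E(w)`; consequently if
`E(p+w) = E(p) + E(w)` then `w·p > 0`. -/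
theorem resonance_inner_pos (κ1 κ2 : ℝ) (hκ1 : 0 < κ1) (hκ2 : 0 < κ2)
    (p w : EuclideanSpace ℝ (Fin 3)) (hp : p ≠ 0) (hw : w ≠ 0) :
    κ2 * ‖p‖ ^ 2 * ‖w‖ ^ 2 < Edisp κ1 κ2 p * Edisp κ1 κ2 w ∧
    (Edisp κ1 κ2 (p + w) = Edisp κ1 κ2 p + Edisp κ1 κ2 w →
      (0 : ℝ) < inner ℝ w p) :=
  ⟨mul_sq_norm_lt_Edisp_mul_Edisp hκ1 hκ2.le hp hw, inner_pos_of_Edisp_add_eq hκ1 hκ2.le hp hw⟩
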